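/- For the state ρ_x = x|ψ⟩⟨ψ| + ((1−x)/32)I₃₂ on (ℂ²)^{⊗5} with |ψ⟩ = (|00000⟩+|11111⟩)/√2, the five-body correlation tensor satisfies ‖T^{(12345)}‖² = 16x². Consequently, ρ_x is not 1-1-1-1-1 separable whenever x > 1/4, not 1-1-3 separable whenever x > 1/2, not 1-4 or 1-2-2 separable whenever x > 3/4, and not 2-3 separable whenever x > √3/2. -/

import Mathlib

open Matrix BigOperators
open scoped ComplexOrder

/-- The Pauli matrices, an orthogonal basis of su(2) with tr(σᵢσⱼ) = 2δᵢⱼ. -/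
noncomputable def pauli : Fin 3 → Matrix (Fin 2) (Fin 2) ℂ :=
  ![!![0, 1; 1, 0], !![0, -Complex.I; Complex.I, 0], !![1, 0; 0, -1]]

/-- The 5-qubit GHZ state vector (|00000⟩ + |11111⟩)/√2. -/
noncomputable def ghz5 : (Fin 5 → Fin 2) → ℂ :=
  fun v => if (v = fun _ => 0) ∨ (v = fun _ => 1) then ((1 / Real.sqrt 2 : ℝ) : ℂ) else 0

/-- The noisy 5-qubit GHZ state ρ_x = x|ψ⟩⟨ψ| + ((1−x)/32)I₃₂. -/
noncomputable def rhoX5 (x : ℝ) : Matrix (Fin 5 → Fin 2) (Fin 5 → Fin 2) ℂ :=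
  (x : ℂ) • Matrix.vecMulVec ghz5 (star ghz5) +
    (((1 - x) / 32 : ℝ) : ℂ) • (1 : Matrix (Fin 5 → Fin 2) (Fin 5 → Fin 2) ℂ)

/-- Squared Frobenius norm of the full 5-body Pauli correlation tensor. -/
noncomputable def corrSq5 (σ : Matrix (Fin 5 → Fin 2) (Fin 5 → Fin 2) ℂ) : ℝ :=
  ∑ i : Fin 5 → Fin 3,
    (Complex.re ((σ * Matrix.of fun (x y : Fin 5 → Fin 2) =>
      ∏ s, pauli (i s) (x s) (y s)).trace)) ^ 2

/-- A 5-qubit state is a (pure-state) product across the partition given by the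
block assignment `P`. -/
def ProdAcross {k : ℕ} (P : Fin 5 → Fin k)
    (σ : Matrix (Fin 5 → Fin 2) (Fin 5 → Fin 2) ℂ) : Prop :=
  ∃ ρB : (t : Fin k) → Matrix ({s : Fin 5 // P s = t} → Fin 2) ({s : Fin 5 // P s = t} → Fin 2) ℂ,
    (∀ t, (ρB t).PosSemidef ∧ (ρB t).trace = 1) ∧
    ∀ x y, σ x y = ∏ t, ρB t (fun s => x s.1) (fun s => y s.1)

/-- A 5-qubit state is separable across the partition given by `P`: it is a convex
mixture of pure states, each a product across `P`. -/
def SepAcross {k : ℕ} (P : Fin 5 → Fin k)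
    (ρ : Matrix (Fin 5 → Fin 2) (Fin 5 → Fin 2) ℂ) : Prop :=
  ∃ (N : ℕ) (p : Fin N → ℝ) (φ : Fin N → Matrix (Fin 5 → Fin 2) (Fin 5 → Fin 2) ℂ),
    (∀ i, 0 ≤ p i) ∧ ∑ i, p i = 1 ∧
    (∀ i, (φ i).PosSemidef ∧ (φ i).trace = 1 ∧ φ i * φ i = φ i ∧ ProdAcross P (φ i)) ∧
    ρ = ∑ i, (p i : ℂ) • φ i

/-- The multiset of block sizes of the partition given by `P`. -/
def blockSizes {k : ℕ} (P : Fin 5 → Fin k) : Multiset ℕ :=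
  Finset.univ.val.map fun t : Fin k => Fintype.card {s : Fin 5 // P s = t}

/-!
For a Pauli string `σ_i`, only the entries of `σ_i` between `|00000⟩` and `|11111⟩` meet the GHZ
projector, and the diagonal ones cancel because `σ_j 1 1 = -σ_j 0 0` and five is odd; as the strings
are traceless, `tr(ρ_x σ_i) = x Re ∏ₛ w_{iₛ}` with `w = (1, -i, 0)`. Writing
`2 (Re z)² = Re z² + |z|²` and expanding the products gives
`‖T‖² = x² (Re (∑ w_j²)⁵ + (∑ |w_j|²)⁵) / 2 = x² (0 + 32) / 2 = 16 x²`.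

Full separability: a product of qubit states `r_s` has `‖T‖² = ∏ₛ ∑_j tr(r_s σ_j)² ≤ 1` by the
Bloch-ball bound, and `{σ | ‖T(σ)‖² ≤ 1}` is convex, so `16 x² ≤ 1`. For a partition into at least
two blocks we use the GHZ fidelity instead: for a product state it is
`(∏ p_t + ∏ q_t + 2 Re ∏ c_t) / 2 ≤ 1/2` (with `p_t, q_t, c_t` the entries of the block states at
the all-zero and all-one configurations, `|c_t|² ≤ p_t q_t`), whereas
`⟨ψ|ρ_x|ψ⟩ = x + (1 - x)/32 > 1/2` once `x > 15/31`, below each of `1/2`, `3/4`, `√3/2`.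
-/

namespace Matrix

section PiKron

variable {ι n R : Type*} [Fintype ι] [CommSemiring R]

/-- The Kronecker product `⨂ₛ A s`, indexed by configurations `ι → n`. -/
def piKron (A : ι → Matrix n n R) : Matrix (ι → n) (ι → n) R :=
  of fun x y => ∏ s, A s (x s) (y s)

@[simp] lemma piKron_apply (A : ι → Matrix n n R) (x y : ι → n) :
    piKron A x y = ∏ s, A s (x s) (y s) := rfl

variable [Fintype n] [DecidableEq ι]

lemma piKron_mul (A B : ι → Matrix n n R) : piKron A * piKron B = piKron (A * B) := by
  ext x z
  simp only [mul_apply, piKron_apply, Pi.mul_apply, ← Finset.prod_mul_distrib, Fintype.prod_sum]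

lemma trace_piKron (A : ι → Matrix n n R) : trace (piKron A) = ∏ s, trace (A s) := by
  simp only [trace, diag_apply, piKron_apply, Fintype.prod_sum]

end PiKron

variable {n : Type*}

lemma PosSemidef.normSq_apply_le {A : Matrix n n ℂ} (hA : A.PosSemidef) (a b : n) :
    Complex.normSq (A a b) ≤ (A a a).re * (A b b).re := by
  have hdet := (hA.submatrix ![a, b]).det_nonneg
  rw [det_fin_two] at hdet
  simp only [submatrix_apply, cons_val_zero, cons_val_one] at hdet
  rw [← hA.isHermitian.apply b a, ← hA.isHermitian.coe_re_apply_self a,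
    ← hA.isHermitian.coe_re_apply_self b] at hdet
  simpa [Complex.normSq_apply, mul_comm] using (Complex.le_def.1 hdet).1

variable [Fintype n]

lemma mulVec_single_add_single_dotProduct {R : Type*} [DecidableEq n] [CommSemiring R]
    (M : Matrix n n R) (a b : n) :
    (M *ᵥ (Pi.single a 1 + Pi.single b 1)) ⬝ᵥ (Pi.single a 1 + Pi.single b 1) =
      M a a + M a b + M b a + M b b := by
  simp only [mulVec_add, dotProduct_add, mulVec_single_one, dotProduct_single_one, Pi.add_apply,
    col_apply]
  ring

noncomputable def reTraceMul (M : Matrix n n ℂ) : Matrix n n ℂ →ₗ[ℝ] ℝ :=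
  Complex.reLm ∘ₗ traceLinearMap n ℝ ℂ ∘ₗ LinearMap.mulRight ℝ M

@[simp] lemma reTraceMul_apply (M σ : Matrix n n ℂ) : reTraceMul M σ = (trace (σ * M)).re := rfl

lemma IsHermitian.coe_re_trace_mul {A B : Matrix n n ℂ} (hA : A.IsHermitian)
    (hB : B.IsHermitian) : ((trace (A * B)).re : ℂ) = trace (A * B) := by
  rw [← Complex.conj_eq_iff_re, ← Complex.star_def, ← trace_conjTranspose, conjTranspose_mul,
    hA.eq, hB.eq, trace_mul_comm]

lemma PosSemidef.re_apply_self_add_le_re_trace {A : Matrix n n ℂ} (hA : A.PosSemidef) {a b : n}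
    (hab : a ≠ b) : (A a a).re + (A b b).re ≤ (trace A).re := by
  rw [trace, Complex.re_sum]
  exact Finset.add_le_sum (f := fun i => (A i i).re)
    (fun i _ => (Complex.le_def.1 (hA.diag_nonneg (i := i))).1)
    (Finset.mem_univ a) (Finset.mem_univ b) hab

end Matrix

lemma Fintype.sum_pi_prod_eq_sum_pow {ι κ R : Type*} [Fintype ι] [DecidableEq ι] [Fintype κ]
    [CommSemiring R] (f : κ → R) :
    ∑ i : ι → κ, ∏ s, f (i s) = (∑ j, f j) ^ Fintype.card ι := by
  rw [← Finset.card_univ, ← Finset.prod_const, Fintype.prod_sum]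

lemma Complex.re_prod_of_coe_re {ι : Type*} (s : Finset ι) {z : ι → ℂ}
    (hz : ∀ i, ((z i).re : ℂ) = z i) : (∏ i ∈ s, z i).re = ∏ i ∈ s, (z i).re := by
  rw [← Complex.ofReal_re (∏ i ∈ s, (z i).re), Complex.ofReal_prod]
  simp only [hz]

lemma Complex.sum_re_prod_sq {ι κ : Type*} [Fintype ι] [DecidableEq ι] [Fintype κ] (w : κ → ℂ) :
    ∑ i : ι → κ, (∏ s, w (i s)).re ^ 2 =
      (((∑ j, w j ^ 2) ^ Fintype.card ι).re + (∑ j, Complex.normSq (w j)) ^ Fintype.card ι) / 2 := by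
  have hre : ∀ z : ℂ, z.re ^ 2 = ((z ^ 2).re + Complex.normSq z) / 2 := fun z => by
    rw [sq, sq, Complex.mul_re, Complex.normSq_apply]; ring
  simp only [hre, ← Finset.sum_div, Finset.sum_add_distrib, ← Complex.re_sum, map_prod,
    ← Finset.prod_pow, Fintype.sum_pi_prod_eq_sum_pow fun j => w j ^ 2,
    Fintype.sum_pi_prod_eq_sum_pow fun j => Complex.normSq (w j)]

lemma convex_setOf_sum_sq_le_one {E ι : Type*} [AddCommGroup E] [Module ℝ E] [Fintype ι]
    (f : ι → E →ₗ[ℝ] ℝ) : Convex ℝ {v | ∑ i, f i v ^ 2 ≤ 1} := by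
  let F : E →ₗ[ℝ] EuclideanSpace ℝ ι :=
    (WithLp.linearEquiv 2 ℝ (ι → ℝ)).symm.toLinearMap ∘ₗ LinearMap.pi f
  have hF : {v | ∑ i, f i v ^ 2 ≤ 1} = F ⁻¹' Metric.closedBall 0 1 := by
    ext v
    rw [Set.mem_preimage, mem_closedBall_zero_iff, ← sq_le_one_iff₀ (norm_nonneg _),
      EuclideanSpace.norm_sq_eq]
    simp [F]
  rw [hF]
  exact (convex_closedBall 0 1).linear_preimage F

lemma prod_add_prod_add_two_mul_prod_le_one {ι : Type*} [Fintype ι] [Nontrivial ι]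
    {p q c : ι → ℝ} (hp : ∀ t, 0 ≤ p t) (hq : ∀ t, 0 ≤ q t) (hc : ∀ t, 0 ≤ c t)
    (hpq : ∀ t, p t + q t ≤ 1) (hcpq : ∀ t, c t ^ 2 ≤ p t * q t) :
    ∏ t, p t + ∏ t, q t + 2 * ∏ t, c t ≤ 1 := by
  classical
  obtain ⟨t₀, t₁, ht⟩ := exists_pair_ne ι
  have hpair : ∀ f : ι → ℝ, (∀ t, 0 ≤ f t) → (∀ t, f t ≤ 1) → ∏ t, f t ≤ f t₀ * f t₁ :=
    fun f hf0 hf1 => by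
      rw [← Finset.prod_pair ht]
      exact Finset.prod_le_prod_of_subset_of_le_one (Finset.subset_univ _) (fun t _ => hf0 t)
        fun t _ _ => hf1 t
  have hp1 : ∀ t, p t ≤ 1 := fun t => by linarith [hq t, hpq t]
  have hq1 : ∀ t, q t ≤ 1 := fun t => by linarith [hp t, hpq t]
  have hc1 : ∀ t, c t ≤ 1 := fun t => by
    nlinarith [hcpq t, hp t, hq t, hpq t, hp1 t, mul_le_one₀ (hp1 t) (hq t) (hq1 t)]
  have hamgm : 2 * (c t₀ * c t₁) ≤ p t₀ * q t₁ + q t₀ * p t₁ := by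
    have h : (c t₀ * c t₁) ^ 2 ≤ (p t₀ * q t₁) * (q t₀ * p t₁) := by
      rw [mul_pow]
      nlinarith [mul_le_mul (hcpq t₀) (hcpq t₁) (sq_nonneg _) (mul_nonneg (hp t₀) (hq t₀))]
    nlinarith [sq_nonneg (p t₀ * q t₁ - q t₀ * p t₁), mul_nonneg (hc t₀) (hc t₁),
      mul_nonneg (hp t₀) (hq t₁), mul_nonneg (hq t₀) (hp t₁)]
  calc ∏ t, p t + ∏ t, q t + 2 * ∏ t, c t
      ≤ p t₀ * p t₁ + q t₀ * q t₁ + 2 * (c t₀ * c t₁) := by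
        gcongr
        exacts [hpair p hp hp1, hpair q hq hq1, hpair c hc hc1]
    _ ≤ (p t₀ + q t₀) * (p t₁ + q t₁) := by linarith
    _ ≤ 1 := mul_le_one₀ (hpq t₀) (add_nonneg (hp t₁) (hq t₁)) (hpq t₁)

lemma pauli_one_one (j : Fin 3) : pauli j 1 1 = -pauli j 0 0 := by
  fin_cases j <;> simp [pauli]

lemma pauli_one_zero (j : Fin 3) : pauli j 1 0 = star (pauli j 0 1) := by
  fin_cases j <;> simp [pauli]

lemma trace_pauli (j : Fin 3) : trace (pauli j) = 0 := by
  fin_cases j <;> simp [pauli, trace_fin_two]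

lemma isHermitian_pauli (j : Fin 3) : (pauli j).IsHermitian := by
  ext a b
  fin_cases j <;> fin_cases a <;> fin_cases b <;> simp [pauli]

lemma sum_pauli_zero_one_sq : ∑ j, pauli j 0 1 ^ 2 = 0 := by
  simp [Fin.sum_univ_three, pauli]

lemma sum_normSq_pauli_zero_one : ∑ j, Complex.normSq (pauli j 0 1) = 2 := by
  simp [Fin.sum_univ_three, pauli, one_add_one_eq_two]

lemma sum_re_trace_mul_pauli_sq_le_one {r : Matrix (Fin 2) (Fin 2) ℂ} (hr : r.PosSemidef)
    (htr : r.trace = 1) : ∑ j, (trace (r * pauli j)).re ^ 2 ≤ 1 := by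
  have h10 : r 1 0 = star (r 0 1) := (hr.isHermitian.apply 1 0).symm
  have hx : (trace (r * pauli 0)).re = 2 * (r 0 1).re := by
    simp [trace_fin_two, mul_apply, pauli, h10, two_mul]
  have hy : (trace (r * pauli 1)).re = -2 * (r 0 1).im := by
    simp [trace_fin_two, mul_apply, pauli, h10, two_mul]
  have hz : (trace (r * pauli 2)).re = (r 0 0).re - (r 1 1).re := by
    simp [trace_fin_two, mul_apply, pauli, sub_eq_add_neg]
  have hsum : (r 0 0).re + (r 1 1).re = 1 := by
    simpa [trace_fin_two] using congrArg Complex.re htr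
  have hc := hr.normSq_apply_le 0 1
  rw [Complex.normSq_apply] at hc
  rw [Fin.sum_univ_three, hx, hy, hz]
  nlinarith

lemma const_zero_ne_const_one : (fun _ => 0 : Fin 5 → Fin 2) ≠ fun _ => 1 :=
  fun h => by simpa using congrFun h 0

lemma ghz5_eq_smul :
    ghz5 = ((1 / Real.sqrt 2 : ℝ) : ℂ) • (Pi.single (fun _ => 0) 1 + Pi.single (fun _ => 1) 1) := by
  ext v
  by_cases h0 : v = fun _ => 0
  · subst h0; simp [ghz5, const_zero_ne_const_one]
  by_cases h1 : v = fun _ => 1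
  · subst h1; simp [ghz5, const_zero_ne_const_one.symm]
  · simp [ghz5, h0, h1]

lemma star_ghz5 : star ghz5 = ghz5 := by
  ext v
  simp [ghz5, apply_ite star]

lemma trace_mul_vecMulVec_ghz5 (M : Matrix (Fin 5 → Fin 2) (Fin 5 → Fin 2) ℂ) :
    trace (M * vecMulVec ghz5 (star ghz5)) =
      (M (fun _ => 0) (fun _ => 0) + M (fun _ => 0) (fun _ => 1) +
        M (fun _ => 1) (fun _ => 0) + M (fun _ => 1) (fun _ => 1)) / 2 := by
  have hc : ((1 / Real.sqrt 2 : ℝ) : ℂ) * ((1 / Real.sqrt 2 : ℝ) : ℂ) = 1 / 2 := by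
    rw [← Complex.ofReal_mul, div_mul_div_comm, one_mul, Real.mul_self_sqrt zero_le_two]
    simp
  rw [mul_vecMulVec, trace_vecMulVec, star_ghz5, ghz5_eq_smul, mulVec_smul, smul_dotProduct,
    dotProduct_smul, mulVec_single_add_single_dotProduct, smul_eq_mul, smul_eq_mul, ← mul_assoc, hc]
  ring

lemma trace_piKron_pauli_mul_vecMulVec_ghz5 (i : Fin 5 → Fin 3) :
    trace ((piKron fun s => pauli (i s)) * vecMulVec ghz5 (star ghz5)) =
      ((∏ s, pauli (i s) 0 1).re : ℂ) := by
  rw [trace_mul_vecMulVec_ghz5]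
  simp only [piKron_apply, pauli_one_one, pauli_one_zero, Finset.prod_neg, ← star_prod]
  have h := Complex.add_conj (∏ s, pauli (i s) 0 1)
  push_cast at h
  rw [Finset.card_univ, Fintype.card_fin, Complex.star_def]
  linear_combination h / 2

lemma trace_rhoX5_mul (x : ℝ) (M : Matrix (Fin 5 → Fin 2) (Fin 5 → Fin 2) ℂ) :
    trace (rhoX5 x * M) =
      x * trace (M * vecMulVec ghz5 (star ghz5)) + ((1 - x) / 32 : ℝ) * trace M := by
  rw [rhoX5, add_mul, smul_mul_assoc, smul_mul_assoc, one_mul, trace_add, trace_smul, trace_smul,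
    trace_mul_comm, smul_eq_mul, smul_eq_mul]

lemma corrSq5_rhoX5 (x : ℝ) : corrSq5 (rhoX5 x) = 16 * x ^ 2 := by
  have hentry : ∀ i : Fin 5 → Fin 3,
      (trace (rhoX5 x * piKron fun s => pauli (i s))).re = x * (∏ s, pauli (i s) 0 1).re := by
    intro i
    have htr : trace (piKron fun s => pauli (i s)) = 0 := by
      rw [trace_piKron]
      exact Finset.prod_eq_zero (Finset.mem_univ 0) (trace_pauli _)
    rw [trace_rhoX5_mul, trace_piKron_pauli_mul_vecMulVec_ghz5, htr]
    simp
  change ∑ i : Fin 5 → Fin 3, (trace (rhoX5 x * piKron fun s => pauli (i s))).re ^ 2 = _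
  simp only [hentry, mul_pow, ← Finset.mul_sum, Complex.sum_re_prod_sq fun j => pauli j 0 1,
    sum_pauli_zero_one_sq, sum_normSq_pauli_zero_one, Fintype.card_fin]
  norm_num [mul_comm]

lemma re_trace_rhoX5_mul_vecMulVec_ghz5 (x : ℝ) :
    (trace (rhoX5 x * vecMulVec ghz5 (star ghz5))).re = x + (1 - x) / 32 := by
  have hc : (Real.sqrt 2 : ℂ)⁻¹ * (Real.sqrt 2 : ℂ)⁻¹ = 1 / 2 := by
    rw [← mul_inv, ← Complex.ofReal_mul, Real.mul_self_sqrt zero_le_two]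
    norm_num
  have htr : trace (vecMulVec ghz5 (star ghz5)) = trace (1 * vecMulVec ghz5 (star ghz5)) := by
    rw [one_mul]
  rw [trace_rhoX5_mul, htr, trace_mul_vecMulVec_ghz5, trace_mul_vecMulVec_ghz5]
  norm_num [vecMulVec_apply, star_ghz5, ghz5, one_apply_ne const_zero_ne_const_one,
    one_apply_ne const_zero_ne_const_one.symm, hc]

lemma corrSq5_piKron_le_one {r : Fin 5 → Matrix (Fin 2) (Fin 2) ℂ}
    (hr : ∀ s, (r s).PosSemidef ∧ (r s).trace = 1) : corrSq5 (piKron r) ≤ 1 := by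
  have hfactor : ∀ i : Fin 5 → Fin 3, (trace (piKron r * piKron fun s => pauli (i s))).re =
      ∏ s, (trace (r s * pauli (i s))).re := fun i => by
    rw [piKron_mul, trace_piKron]
    exact Complex.re_prod_of_coe_re _ fun s =>
      (hr s).1.isHermitian.coe_re_trace_mul (isHermitian_pauli (i s))
  change ∑ i : Fin 5 → Fin 3, (trace (piKron r * piKron fun s => pauli (i s))).re ^ 2 ≤ 1
  simp only [hfactor, ← Finset.prod_pow]
  rw [← Fintype.prod_sum fun s j => (trace (r s * pauli j)).re ^ 2]
  exact Finset.prod_le_one (fun s _ => Finset.sum_nonneg fun j _ => sq_nonneg _)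
    fun s _ => sum_re_trace_mul_pauli_sq_le_one (hr s).1 (hr s).2

lemma ProdAcross.exists_eq_piKron {k : ℕ} {P : Fin 5 → Fin k} (hP : P.Bijective)
    {φ : Matrix (Fin 5 → Fin 2) (Fin 5 → Fin 2) ℂ} (hφ : ProdAcross P φ) :
    ∃ r : Fin 5 → Matrix (Fin 2) (Fin 2) ℂ,
      (∀ s, (r s).PosSemidef ∧ (r s).trace = 1) ∧ φ = piKron r := by
  obtain ⟨ρB, hρB, hprod⟩ := hφ
  -- the block of `P s` is `{s}`, so its configurations are the constant functions
  have hrestrict : ∀ (s) (x : Fin 5 → Fin 2),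
      (fun z : {s' // P s' = P s} => x z.1) = fun _ => x s :=
    fun s x => funext fun z => congrArg x (hP.1 z.2)
  have hconst : ∀ s,
      Function.Bijective fun a : Fin 2 => (fun _ => a : {s' // P s' = P s} → Fin 2) :=
    fun s => ⟨fun a b h => congrFun h ⟨s, rfl⟩,
      fun w => ⟨w ⟨s, rfl⟩, funext fun z =>
        congrArg w (Subtype.ext (hP.1 z.2) : z = ⟨s, rfl⟩).symm⟩⟩
  refine ⟨fun s => (ρB (P s)).submatrix (fun a _ => a) (fun a _ => a),
    fun s => ⟨(hρB _).1.submatrix _, ?_⟩, ?_⟩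
  · rw [← (hρB (P s)).2]
    exact (hconst s).sum_comp fun w => ρB (P s) w w
  · ext x y
    rw [hprod, ← hP.prod_comp]
    simp only [hrestrict]
    rfl

lemma ProdAcross.fidelity_le_half {k : ℕ} (hk : 1 < k) {P : Fin 5 → Fin k} (hP : P.Surjective)
    {φ : Matrix (Fin 5 → Fin 2) (Fin 5 → Fin 2) ℂ} (hφ : ProdAcross P φ) :
    (trace (φ * vecMulVec ghz5 (star ghz5))).re ≤ 1 / 2 := by
  obtain ⟨ρB, hρB, hprod⟩ := hφ
  have : Nontrivial (Fin k) := Fin.nontrivial_iff_two_le.2 hk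
  let e₀ : ∀ t, {s // P s = t} → Fin 2 := fun _ _ => 0
  let e₁ : ∀ t, {s // P s = t} → Fin 2 := fun _ _ => 1
  have he : ∀ t, e₀ t ≠ e₁ t := fun t h => by
    obtain ⟨s, hs⟩ := hP t
    simpa [e₀, e₁] using congrFun h ⟨s, hs⟩
  have hreal : ∀ t (w : {s // P s = t} → Fin 2), ((ρB t w w).re : ℂ) = ρB t w w :=
    fun t w => (hρB t).1.isHermitian.coe_re_apply_self w
  have hnorm : ‖∏ t, ρB t (e₁ t) (e₀ t)‖ = ∏ t, ‖ρB t (e₀ t) (e₁ t)‖ := by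
    rw [norm_prod]
    exact Finset.prod_congr rfl fun t _ => by rw [← (hρB t).1.isHermitian.apply, norm_star]
  have hbound := prod_add_prod_add_two_mul_prod_le_one (p := fun t => (ρB t (e₀ t) (e₀ t)).re)
    (q := fun t => (ρB t (e₁ t) (e₁ t)).re) (c := fun t => ‖ρB t (e₀ t) (e₁ t)‖)
    (fun t => (Complex.le_def.1 ((hρB t).1.diag_nonneg)).1)
    (fun t => (Complex.le_def.1 ((hρB t).1.diag_nonneg)).1) (fun t => norm_nonneg _)
    (fun t => by simpa [(hρB t).2] using (hρB t).1.re_apply_self_add_le_re_trace (he t))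
    (fun t => by rw [← Complex.normSq_eq_norm_sq]; exact (hρB t).1.normSq_apply_le _ _)
  rw [trace_mul_vecMulVec_ghz5, hprod, hprod, hprod, hprod]
  change ((∏ t, ρB t (e₀ t) (e₀ t) + ∏ t, ρB t (e₀ t) (e₁ t) + ∏ t, ρB t (e₁ t) (e₀ t) +
    ∏ t, ρB t (e₁ t) (e₁ t)) / 2).re ≤ 1 / 2
  simp only [Complex.div_ofNat_re, Complex.add_re, Complex.re_prod_of_coe_re _ fun t => hreal t _]
  have h01 := Complex.re_le_norm (∏ t, ρB t (e₀ t) (e₁ t))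
  have h10 := Complex.re_le_norm (∏ t, ρB t (e₁ t) (e₀ t))
  rw [norm_prod] at h01
  rw [hnorm] at h10
  linarith

lemma SepAcross.mem_of_convex {k : ℕ} {P : Fin 5 → Fin k}
    {ρ : Matrix (Fin 5 → Fin 2) (Fin 5 → Fin 2) ℂ}
    {S : Set (Matrix (Fin 5 → Fin 2) (Fin 5 → Fin 2) ℂ)} (hS : Convex ℝ S)
    (hprod : ∀ φ, ProdAcross P φ → φ ∈ S) (h : SepAcross P ρ) : ρ ∈ S := by
  obtain ⟨N, p, φ, hp0, hp1, hφ, rfl⟩ := h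
  simp only [Complex.coe_smul]
  exact hS.sum_mem (fun i _ => hp0 i) hp1 fun i _ => hprod _ (hφ i).2.2.2

lemma not_sepAcross_rhoX5_of_bijective {x : ℝ} (hx : 1 / 4 < x) {k : ℕ} {P : Fin 5 → Fin k}
    (hP : P.Bijective) : ¬ SepAcross P (rhoX5 x) := fun h => by
  have hcorr : corrSq5 (rhoX5 x) ≤ 1 := h.mem_of_convex (S := {σ | corrSq5 σ ≤ 1})
    (convex_setOf_sum_sq_le_one fun i : Fin 5 → Fin 3 => reTraceMul (piKron fun s => pauli (i s)))
    fun φ hφ => by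
      obtain ⟨r, hr, rfl⟩ := hφ.exists_eq_piKron hP
      exact corrSq5_piKron_le_one hr
  rw [corrSq5_rhoX5] at hcorr
  nlinarith

lemma not_sepAcross_rhoX5_of_surjective {x : ℝ} (hx : 15 / 31 < x) {k : ℕ} (hk : 1 < k)
    {P : Fin 5 → Fin k} (hP : P.Surjective) : ¬ SepAcross P (rhoX5 x) := fun h => by
  have hfid : (trace (rhoX5 x * vecMulVec ghz5 (star ghz5))).re ≤ 1 / 2 :=
    h.mem_of_convex (S := {σ | reTraceMul (vecMulVec ghz5 (star ghz5)) σ ≤ 1 / 2})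
      (convex_halfSpace_le (reTraceMul _).isLinear _) fun φ hφ => hφ.fidelity_le_half hk hP
  rw [re_trace_rhoX5_mul_vecMulVec_ghz5] at hfid
  linarith

lemma card_block_mem_blockSizes {k : ℕ} (P : Fin 5 → Fin k) (t : Fin k) :
    Fintype.card {s // P s = t} ∈ blockSizes P :=
  Multiset.mem_map_of_mem _ (Finset.mem_univ t)

lemma bijective_of_blockSizes {k : ℕ} {P : Fin 5 → Fin k} (h : ∀ n ∈ blockSizes P, n = 1) :
    P.Bijective :=
  (Function.bijective_iff_existsUnique P).2 fun t => by
    obtain ⟨⟨s, hs⟩, huniq⟩ := Fintype.card_eq_one_iff.1 (h _ (card_block_mem_blockSizes P t))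
    exact ⟨s, hs, fun s' hs' => congrArg Subtype.val (huniq ⟨s', hs'⟩)⟩

lemma surjective_of_blockSizes {k : ℕ} {P : Fin 5 → Fin k} (h : 0 ∉ blockSizes P) :
    P.Surjective := fun t => by
  have hcard := card_block_mem_blockSizes P t
  obtain ⟨⟨s, hs⟩⟩ := Fintype.card_pos_iff.1 (Nat.pos_of_ne_zero fun h0 => h (h0 ▸ hcard))
  exact ⟨s, hs⟩

theorem ghz5_mixture_correlation_and_separability (x : ℝ) :
    corrSq5 (rhoX5 x) = 16 * x ^ 2 ∧
    (x > 1 / 4 → ∀ P : Fin 5 → Fin 5,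
      blockSizes P = ({1, 1, 1, 1, 1} : Multiset ℕ) → ¬ SepAcross P (rhoX5 x)) ∧
    (x > 1 / 2 → ∀ P : Fin 5 → Fin 3,
      blockSizes P = ({1, 1, 3} : Multiset ℕ) → ¬ SepAcross P (rhoX5 x)) ∧
    (x > 3 / 4 →
      (∀ P : Fin 5 → Fin 2, blockSizes P = ({1, 4} : Multiset ℕ) → ¬ SepAcross P (rhoX5 x)) ∧
      (∀ P : Fin 5 → Fin 3, blockSizes P = ({1, 2, 2} : Multiset ℕ) → ¬ SepAcross P (rhoX5 x))) ∧
    (x > Real.sqrt 3 / 2 → ∀ P : Fin 5 → Fin 2,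
      blockSizes P = ({2, 3} : Multiset ℕ) → ¬ SepAcross P (rhoX5 x)) := by
  have hsqrt3 : 15 / 31 < Real.sqrt 3 / 2 := by
    have : 30 / 31 < Real.sqrt 3 := (Real.lt_sqrt (by norm_num)).2 (by norm_num)
    linarith
  refine ⟨corrSq5_rhoX5 x, fun hx P hP => ?_, fun hx P hP => ?_,
    fun hx => ⟨fun P hP => ?_, fun P hP => ?_⟩, fun hx P hP => ?_⟩
  · exact not_sepAcross_rhoX5_of_bijective hx (bijective_of_blockSizes (by simp [hP]))
  all_goals
    exact not_sepAcross_rhoX5_of_surjective (by linarith) (by norm_num)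
      (surjective_of_blockSizes (by simp [hP]))
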